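/- For every n ≥ 0 there is a bijection Φ from the edge set of the grid graph Γ_n to the vertex set of Δ_n^2 such that for every set M of edges of Γ_n, M is a matching of Γ_n if and only if the image Φ(M) is an independent set of Δ_n^2. Consequently, for each s ≥ 0, the matchings of Γ_n of size s are in bijection with the independent sets of Δ_n^2 of size s. (Equivalently, Δ_n^2 is isomorphic to the line graph of Γ_n, so the matching complex M(Γ_n) equals the independence complex Ind(Δ_n^2).) -/

import Mathlib

attribute [local instance] Classical.propDecidable

/-- Base relation for the `2 × (n+2)` grid graph `Γ_n`: horizontal edges
`(i, k) ∼ (i, k+1)` and vertical edges `(1, k) ∼ (2, k)`. -/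
def gridRel (n : ℕ) : (Fin 2 × Fin (n + 2)) → (Fin 2 × Fin (n + 2)) → Prop :=
  fun x y => (x.1 = y.1 ∧ (y.2 : ℕ) = (x.2 : ℕ) + 1) ∨ (x.2 = y.2 ∧ x.1 ≠ y.1)

/-- The `2 × (n+2)` grid graph `Γ_n`. -/
def gridGraph (n : ℕ) : SimpleGraph (Fin 2 × Fin (n + 2)) :=
  SimpleGraph.fromRel (gridRel n)

/-- Base relation for `Δ_n^m`. -/
def deltaRel (m n : ℕ) :
    (Fin 2 ⊕ (Fin m × Fin (n + 1) ⊕ Fin n)) →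
    (Fin 2 ⊕ (Fin m × Fin (n + 1) ⊕ Fin n)) → Prop
  | Sum.inl i, Sum.inr (Sum.inl (_, s)) => (i = 0 ∧ (s : ℕ) = 0) ∨ (i = 1 ∧ (s : ℕ) = n)
  | Sum.inr (Sum.inl (j, s)), Sum.inr (Sum.inl (j', s')) => j = j' ∧ (s' : ℕ) = (s : ℕ) + 1
  | Sum.inr (Sum.inr t), Sum.inr (Sum.inl (_, s)) => (s : ℕ) = (t : ℕ) ∨ (s : ℕ) = (t : ℕ) + 1
  | _, _ => False

/-- The graph `Δ_n^m`. -/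
def deltaGraph (m n : ℕ) : SimpleGraph (Fin 2 ⊕ (Fin m × Fin (n + 1) ⊕ Fin n)) :=
  SimpleGraph.fromRel (deltaRel m n)

def phiCol (n : ℕ) (i : Fin 2) : Fin (n + 2) := if i = 0 then 0 else Fin.last (n + 1)

@[simp] lemma phiCol_zero (n : ℕ) : phiCol n 0 = 0 := by simp [phiCol]
@[simp] lemma phiCol_one (n : ℕ) : phiCol n 1 = Fin.last (n + 1) := by simp [phiCol]

def phiInv (n : ℕ) : (Fin 2 ⊕ (Fin 2 × Fin (n + 1) ⊕ Fin n)) → Sym2 (Fin 2 × Fin (n + 2))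
  | Sum.inl i => s((0, phiCol n i), (1, phiCol n i))
  | Sum.inr (Sum.inl (j, s)) => s((j, s.castSucc), (j, s.succ))
  | Sum.inr (Sum.inr t) => s((0, t.succ.castSucc), (1, t.succ.castSucc))

lemma phiInv_mem (n : ℕ) (x : Fin 2 ⊕ (Fin 2 × Fin (n + 1) ⊕ Fin n)) :
    phiInv n x ∈ (gridGraph n).edgeSet := by
  rcases x with i | ⟨j, s⟩ | t <;>
    simp [phiInv, gridGraph, gridRel, Prod.ext_iff, Fin.ext_iff]

lemma phiInv_inj (n : ℕ) : Function.Injective (phiInv n) := by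
  intro x y h
  rcases x with i | ⟨j, s⟩ | t <;> rcases y with i' | ⟨j', s'⟩ | t'
  · have hs := Fin.is_lt i; have hs' := Fin.is_lt i'
    fin_cases i <;> fin_cases i' <;>
      simp_all [phiInv, Sym2.eq_iff, Prod.ext_iff, Fin.ext_iff]
  · exfalso; have := s'.isLt
    fin_cases i <;>
      (simp only [phiInv, Fin.mk_zero, Fin.mk_one, Fin.zero_eta, Fin.mk_one, phiCol_zero, phiCol_one,
        Sym2.eq_iff, Prod.mk.injEq, Fin.ext_iff, Fin.coe_castSucc, Fin.val_succ, Fin.val_zero,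
        Fin.val_one, Fin.val_last] at h
       omega)
  · exfalso; have := t'.isLt
    fin_cases i <;>
      simp_all [phiInv, Sym2.eq_iff, Prod.ext_iff, Fin.ext_iff] <;> omega
  · exfalso; have := s.isLt
    fin_cases i' <;>
      (simp only [phiInv, Fin.mk_zero, Fin.mk_one, Fin.zero_eta, Fin.mk_one, phiCol_zero, phiCol_one,
        Sym2.eq_iff, Prod.mk.injEq, Fin.ext_iff, Fin.coe_castSucc, Fin.val_succ, Fin.val_zero,
        Fin.val_one, Fin.val_last] at h
       omega)
  · have := s.isLt; have := s'.isLt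
    simp only [phiInv, Sym2.eq_iff, Prod.mk.injEq, Fin.ext_iff, Fin.coe_castSucc,
      Fin.val_succ] at h
    have hj : j = j' := by
      rcases h with ⟨⟨h1, _⟩, _⟩ | ⟨⟨h1, _⟩, _⟩ <;> exact Fin.ext h1
    have hsv : (s : ℕ) = (s' : ℕ) := by omega
    subst hj; simp [Fin.ext_iff, hsv]
  · exfalso; have := s.isLt; have := t'.isLt
    simp only [phiInv, Sym2.eq_iff, Prod.mk.injEq, Fin.ext_iff, Fin.coe_castSucc,
      Fin.val_succ, Fin.val_zero, Fin.val_one] at h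
    omega
  · exfalso; have := t.isLt
    fin_cases i' <;>
      simp_all [phiInv, Sym2.eq_iff, Prod.ext_iff, Fin.ext_iff] <;> omega
  · exfalso; have := s'.isLt; have := t.isLt
    simp only [phiInv, Sym2.eq_iff, Prod.mk.injEq, Fin.ext_iff, Fin.coe_castSucc,
      Fin.val_succ, Fin.val_zero, Fin.val_one] at h
    omega
  · have := t.isLt; have := t'.isLt
    simp only [phiInv, Sym2.eq_iff, Prod.mk.injEq, Fin.ext_iff, Fin.coe_castSucc,
      Fin.val_succ, Fin.val_zero, Fin.val_one] at h
    have : (t : ℕ) = (t' : ℕ) := by omega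
    simp [Fin.ext_iff, this]

lemma sym2_shared {α} (a b c d : α) :
    (∃ v, v ∈ s(a,b) ∧ v ∈ s(c,d)) ↔ (a = c ∨ a = d ∨ b = c ∨ b = d) := by
  simp only [Sym2.mem_iff]
  constructor
  · rintro ⟨v, (rfl | rfl), (h | h)⟩ <;> tauto
  · rintro (rfl | rfl | rfl | rfl)
    · exact ⟨a, Or.inl rfl, Or.inl rfl⟩
    · exact ⟨a, Or.inl rfl, Or.inr rfl⟩
    · exact ⟨b, Or.inr rfl, Or.inl rfl⟩
    · exact ⟨b, Or.inr rfl, Or.inr rfl⟩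

lemma phiInv_surj (n : ℕ) (e : Sym2 (Fin 2 × Fin (n + 2))) (he : e ∈ (gridGraph n).edgeSet) :
    ∃ x, phiInv n x = e := by
  induction e using Sym2.ind with
  | _ a b =>
    rw [SimpleGraph.mem_edgeSet] at he
    rw [gridGraph, SimpleGraph.fromRel_adj] at he
    obtain ⟨hne, hrel⟩ := he
    obtain ⟨a1, a2⟩ := a; obtain ⟨b1, b2⟩ := b
    have key : ∀ (a1 : Fin 2) (a2 : Fin (n+2)) (b1 : Fin 2) (b2 : Fin (n+2)),
        gridRel n (a1, a2) (b1, b2) → ∃ x, phiInv n x = s((a1,a2),(b1,b2)) := by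
      intro a1 a2 b1 b2 h
      rcases h with ⟨h1, h2⟩ | ⟨h1, h2⟩
      · -- horizontal
        simp only at h1 h2
        subst h1
        have hs : (a2 : ℕ) < n + 1 := by have := b2.isLt; omega
        refine ⟨Sum.inr (Sum.inl (a1, ⟨a2, hs⟩)), ?_⟩
        simp only [phiInv]
        congr 1 <;> simp [Prod.ext_iff, Fin.ext_iff] <;> omega
      · -- vertical
        simp only at h1 h2
        subst h1
        have hcase : (a2 : ℕ) = 0 ∨ (a2 : ℕ) = n + 1 ∨ (0 < (a2 : ℕ) ∧ (a2 : ℕ) < n + 1) := by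
          have := a2.isLt; omega
        have hab : (a1 = 0 ∧ b1 = 1) ∨ (a1 = 1 ∧ b1 = 0) := by
          fin_cases a1 <;> fin_cases b1 <;> simp_all
        have heq : ∀ c : Fin (n+2), (c : ℕ) = (a2 : ℕ) →
            s(((0 : Fin 2), c), ((1 : Fin 2), c)) = s((a1, a2), (b1, a2)) := by
          intro c hc
          have hc' : c = a2 := Fin.ext hc
          subst hc'
          rcases hab with ⟨rfl, rfl⟩ | ⟨rfl, rfl⟩
          · rfl
          · exact Sym2.eq_swap
        rcases hcase with h0 | hl | ⟨h1', h2'⟩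
        · exact ⟨Sum.inl 0, by simpa [phiInv] using heq 0 (by simp [h0])⟩
        · exact ⟨Sum.inl 1, by simpa [phiInv] using heq (Fin.last (n+1)) (by simp [hl])⟩
        · refine ⟨Sum.inr (Sum.inr ⟨(a2 : ℕ) - 1, by omega⟩), ?_⟩
          simpa [phiInv] using heq _ (by simp [Fin.ext_iff]; omega)
    rcases hrel with h | h
    · exact key _ _ _ _ h
    · obtain ⟨x, hx⟩ := key _ _ _ _ h
      exact ⟨x, hx.trans Sym2.eq_swap⟩

lemma rel_iff (n : ℕ) (x y : Fin 2 ⊕ (Fin 2 × Fin (n + 1) ⊕ Fin n)) (hxy : x ≠ y) :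
    (deltaRel 2 n x y ∨ deltaRel 2 n y x) ↔ ∃ v, v ∈ phiInv n x ∧ v ∈ phiInv n y := by
  rcases x with i | ⟨j, s⟩ | t <;> rcases y with i' | ⟨j', s'⟩ | t'
  · fin_cases i <;> fin_cases i' <;>
      first
      | exact absurd rfl hxy
      | (simp only [deltaRel, phiInv, Fin.mk_zero, Fin.mk_one, phiCol_zero, phiCol_one,
          sym2_shared, Prod.mk.injEq, Fin.ext_iff, Fin.val_zero, Fin.val_one,
          Fin.coe_castSucc, Fin.val_succ, Fin.val_last, false_and, true_and, false_or,
          or_false, or_self, false_iff, iff_false, true_iff, iff_true, not_or]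
         omega)
  · have hb := s'.isLt
    fin_cases i <;> fin_cases j' <;>
      (simp only [deltaRel, phiInv, Fin.mk_zero, Fin.mk_one, phiCol_zero, phiCol_one,
        sym2_shared, Prod.mk.injEq, Fin.ext_iff, Fin.val_zero, Fin.val_one,
        Fin.coe_castSucc, Fin.val_succ, Fin.val_last, false_and, true_and, false_or,
        or_false, or_self, false_iff, iff_false, true_iff, iff_true, not_or]
       omega)
  · have hb := t'.isLt
    fin_cases i <;>
      (simp only [deltaRel, phiInv, Fin.mk_zero, Fin.mk_one, phiCol_zero, phiCol_one,
        sym2_shared, Prod.mk.injEq, Fin.ext_iff, Fin.val_zero, Fin.val_one,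
        Fin.coe_castSucc, Fin.val_succ, Fin.val_last, false_and, true_and, false_or,
        or_false, or_self, false_iff, iff_false, true_iff, iff_true, not_or]
       omega)
  · have hb := s.isLt
    fin_cases i' <;> fin_cases j <;>
      (simp only [deltaRel, phiInv, Fin.mk_zero, Fin.mk_one, phiCol_zero, phiCol_one,
        sym2_shared, Prod.mk.injEq, Fin.ext_iff, Fin.val_zero, Fin.val_one,
        Fin.coe_castSucc, Fin.val_succ, Fin.val_last, false_and, true_and, false_or,
        or_false, or_self, false_iff, iff_false, true_iff, iff_true, not_or]
       omega)
  · have hb := s.isLt; have hb' := s'.isLt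
    have hx2 : ¬(j = j' ∧ s = s') := by
      rintro ⟨rfl, rfl⟩; exact hxy rfl
    fin_cases j <;> fin_cases j' <;>
      (simp only [Fin.mk_zero, Fin.mk_one, Fin.ext_iff, Fin.val_zero, Fin.val_one,
        not_and, forall_const, true_and, Prod.mk.injEq] at hx2
       simp only [deltaRel, phiInv, Fin.mk_zero, Fin.mk_one, phiCol_zero, phiCol_one,
        sym2_shared, Prod.mk.injEq, Fin.ext_iff, Fin.val_zero, Fin.val_one,
        Fin.coe_castSucc, Fin.val_succ, Fin.val_last, false_and, true_and, false_or,
        or_false, or_self, false_iff, iff_false, true_iff, iff_true, not_or]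
       omega)
  · have hb := s.isLt; have hb' := t'.isLt
    fin_cases j <;>
      (simp only [deltaRel, phiInv, Fin.mk_zero, Fin.mk_one, phiCol_zero, phiCol_one,
        sym2_shared, Prod.mk.injEq, Fin.ext_iff, Fin.val_zero, Fin.val_one,
        Fin.coe_castSucc, Fin.val_succ, Fin.val_last, false_and, true_and, false_or,
        or_false, or_self, false_iff, iff_false, true_iff, iff_true, not_or]
       omega)
  · have hb := t.isLt
    fin_cases i' <;>
      (simp only [deltaRel, phiInv, Fin.mk_zero, Fin.mk_one, phiCol_zero, phiCol_one,
        sym2_shared, Prod.mk.injEq, Fin.ext_iff, Fin.val_zero, Fin.val_one,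
        Fin.coe_castSucc, Fin.val_succ, Fin.val_last, false_and, true_and, false_or,
        or_false, or_self, false_iff, iff_false, true_iff, iff_true, not_or]
       omega)
  · have hb := t.isLt; have hb' := s'.isLt
    fin_cases j' <;>
      (simp only [deltaRel, phiInv, Fin.mk_zero, Fin.mk_one, phiCol_zero, phiCol_one,
        sym2_shared, Prod.mk.injEq, Fin.ext_iff, Fin.val_zero, Fin.val_one,
        Fin.coe_castSucc, Fin.val_succ, Fin.val_last, false_and, true_and, false_or,
        or_false, or_self, false_iff, iff_false, true_iff, iff_true, not_or]
       omega)
  · have hb := t.isLt; have hb' := t'.isLt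
    have hx2 : ¬(t = t') := by rintro rfl; exact hxy rfl
    have hx3 : (t : ℕ) ≠ (t' : ℕ) := fun h => hx2 (Fin.ext h)
    simp only [deltaRel, phiInv, Fin.mk_zero, Fin.mk_one, phiCol_zero, phiCol_one,
      sym2_shared, Prod.mk.injEq, Fin.ext_iff, Fin.val_zero, Fin.val_one,
      Fin.coe_castSucc, Fin.val_succ, Fin.val_last, false_and, true_and, false_or,
      or_false, or_self, false_iff, iff_false, true_iff, iff_true, not_or]
    omega

lemma adj_iff (n : ℕ) (x y : Fin 2 ⊕ (Fin 2 × Fin (n + 1) ⊕ Fin n)) :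
    (deltaGraph 2 n).Adj x y ↔
      phiInv n x ≠ phiInv n y ∧ ∃ v, v ∈ phiInv n x ∧ v ∈ phiInv n y := by
  rw [deltaGraph, SimpleGraph.fromRel_adj]
  constructor
  · rintro ⟨hne, hrel⟩
    exact ⟨fun h => hne (phiInv_inj n h), (rel_iff n x y hne).1 hrel⟩
  · rintro ⟨hne, hsh⟩
    have hxy : x ≠ y := fun h => hne (by rw [h])
    exact ⟨hxy, (rel_iff n x y hxy).2 hsh⟩

theorem stmt_18 (n : ℕ) :
    ∃ Φ : (gridGraph n).edgeSet ≃ (Fin 2 ⊕ (Fin 2 × Fin (n + 1) ⊕ Fin n)),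
      (∀ M : Set (gridGraph n).edgeSet,
        (∀ e ∈ M, ∀ f ∈ M, e ≠ f →
            ∀ v : Fin 2 × Fin (n + 2), ¬(v ∈ (e : Sym2 (Fin 2 × Fin (n + 2))) ∧
              v ∈ (f : Sym2 (Fin 2 × Fin (n + 2))))) ↔
          (∀ e ∈ M, ∀ f ∈ M, ¬ (deltaGraph 2 n).Adj (Φ e) (Φ f))) ∧
      (∀ s : ℕ,
        (Finset.univ.filter (fun M : Finset (Sym2 (Fin 2 × Fin (n + 2))) =>
            (∀ e ∈ M, e ∈ (gridGraph n).edgeSet) ∧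
            (∀ e ∈ M, ∀ f ∈ M, e ≠ f →
              ∀ v : Fin 2 × Fin (n + 2), ¬(v ∈ e ∧ v ∈ f)) ∧
            M.card = s)).card =
          (Finset.univ.filter (fun S : Finset (Fin 2 ⊕ (Fin 2 × Fin (n + 1) ⊕ Fin n)) =>
            (∀ x ∈ S, ∀ y ∈ S, ¬ (deltaGraph 2 n).Adj x y) ∧ S.card = s)).card) := by
  have hbij : Function.Bijective
      (fun x : Fin 2 ⊕ (Fin 2 × Fin (n + 1) ⊕ Fin n) =>
        (⟨phiInv n x, phiInv_mem n x⟩ : (gridGraph n).edgeSet)) := by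
    constructor
    · intro x y h
      exact phiInv_inj n (congrArg Subtype.val h)
    · rintro ⟨e, he⟩
      obtain ⟨x, hx⟩ := phiInv_surj n e he
      exact ⟨x, Subtype.ext hx⟩
  set g := Equiv.ofBijective _ hbij with hg
  refine ⟨g.symm, ?_, ?_⟩
  · intro M
    have hval : ∀ e : (gridGraph n).edgeSet,
        phiInv n (g.symm e) = (e : Sym2 (Fin 2 × Fin (n + 2))) := by
      intro e
      have := g.apply_symm_apply e
      exact congrArg Subtype.val this
    constructor
    · intro hM e he f hf hadj
      rw [adj_iff] at hadj
      obtain ⟨hne, v, hv1, hv2⟩ := hadj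
      simp only [hval] at hne hv1 hv2
      exact hM e he f hf (fun h => hne (congrArg Subtype.val h)) v ⟨hv1, hv2⟩
    · intro hM e he f hf hef v hv
      refine hM e he f hf ?_
      rw [adj_iff, hval, hval]
      exact ⟨fun h => hef (Subtype.ext h), v, hv.1, hv.2⟩
  · intro s
    refine Finset.card_bij
      (fun M _ => Finset.univ.filter (fun x => phiInv n x ∈ M)) ?_ ?_ ?_
    · intro M hM
      rw [Finset.mem_filter] at hM ⊢
      obtain ⟨-, h1, h2, h3⟩ := hM
      have himg : (Finset.univ.filter (fun x => phiInv n x ∈ M)).image (phiInv n) = M := by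
        ext e
        simp only [Finset.mem_image, Finset.mem_filter, Finset.mem_univ, true_and]
        constructor
        · rintro ⟨x, hx, rfl⟩; exact hx
        · intro heM
          obtain ⟨x, hx⟩ := phiInv_surj n e (h1 e heM)
          exact ⟨x, by rw [hx]; exact heM, hx⟩
      have hcard : (Finset.univ.filter (fun x => phiInv n x ∈ M)).card = M.card := by
        have h2' := Finset.card_image_of_injective
          (Finset.univ.filter (fun x => phiInv n x ∈ M)) (phiInv_inj n)
        rw [himg] at h2'
        exact h2'.symm
      refine ⟨Finset.mem_univ _, ?_, by rw [hcard]; exact h3⟩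
      intro x hx y hy hadj
      rw [Finset.mem_filter] at hx hy
      rw [adj_iff] at hadj
      obtain ⟨hne, v, hv1, hv2⟩ := hadj
      exact h2 _ hx.2 _ hy.2 hne v ⟨hv1, hv2⟩
    · intro M hM M' hM' h
      rw [Finset.mem_filter] at hM hM'
      ext e
      constructor
      · intro he
        obtain ⟨x, hx⟩ := phiInv_surj n e (hM.2.1 e he)
        have : x ∈ Finset.univ.filter (fun x => phiInv n x ∈ M) := by
          rw [Finset.mem_filter]; exact ⟨Finset.mem_univ _, by rw [hx]; exact he⟩
        rw [h, Finset.mem_filter] at this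
        rw [← hx]; exact this.2
      · intro he
        obtain ⟨x, hx⟩ := phiInv_surj n e (hM'.2.1 e he)
        have : x ∈ Finset.univ.filter (fun x => phiInv n x ∈ M') := by
          rw [Finset.mem_filter]; exact ⟨Finset.mem_univ _, by rw [hx]; exact he⟩
        rw [← h, Finset.mem_filter] at this
        rw [← hx]; exact this.2
    · intro S hS
      rw [Finset.mem_filter] at hS
      obtain ⟨-, hind, hcard⟩ := hS
      refine ⟨S.image (phiInv n), ?_, ?_⟩
      · rw [Finset.mem_filter]
        refine ⟨Finset.mem_univ _, ?_, ?_, ?_⟩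
        · intro e he
          obtain ⟨x, -, rfl⟩ := Finset.mem_image.1 he
          exact phiInv_mem n x
        · intro e he f hf hef v hv
          obtain ⟨x, hx, rfl⟩ := Finset.mem_image.1 he
          obtain ⟨y, hy, rfl⟩ := Finset.mem_image.1 hf
          refine hind x hx y hy ?_
          rw [adj_iff]
          exact ⟨hef, v, hv.1, hv.2⟩
        · rw [Finset.card_image_of_injective _ (phiInv_inj n)]; exact hcard
      · ext x
        constructor
        · intro hx
          rw [Finset.mem_filter] at hx
          obtain ⟨-, hx⟩ := hx
          obtain ⟨y, hy, hyx⟩ := Finset.mem_image.1 hx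
          rwa [← phiInv_inj n hyx]
        · intro hx
          rw [Finset.mem_filter]
          exact ⟨Finset.mem_univ _, Finset.mem_image_of_mem _ hx⟩
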